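/- arXiv:math/0310459 — 3 statements merged into one kernel-verified Lean document; each statement's English description precedes it below -/
import Mathlib

section
/- Let p ≠ 3 be a prime, r ≥ 1 with p ≡ ±1 (mod r), and R a commutative ring with (p : R) = 0 containing a unit A with A^{3r} = 1. Then (1 + A^6 + A^{-6})^p = 1 + A^6 + A^{-6}. -/
theorem stmt_3 (p : ℕ) (hp : p.Prime) (hp3 : p ≠ 3) (r : ℕ) (hr : 1 ≤ r)
    (hmod : (p : ℤ) ≡ 1 [ZMOD r] ∨ (p : ℤ) ≡ -1 [ZMOD r])
    (R : Type*) [CommRing R] (hchar : (p : R) = 0)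
    (A : Rˣ) (hA : A ^ (3 * r) = 1) :
    ((1 : R) + ((A ^ 6 : Rˣ) : R) + ((A ^ (-6 : ℤ) : Rˣ) : R)) ^ p
      = (1 : R) + ((A ^ 6 : Rˣ) : R) + ((A ^ (-6 : ℤ) : Rˣ) : R) := by
  have hdvd : ringChar R ∣ p := ringChar.dvd hchar
  rcases hp.eq_one_or_self_of_dvd _ hdvd with h1 | hpr
  · haveI : CharP R 1 := h1 ▸ ringChar.charP R
    haveI : Subsingleton R := CharP.CharOne.subsingleton
    exact Subsingleton.elim _ _
  haveI : CharP R p := hpr ▸ ringChar.charP R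
  haveI : ExpChar R p := .prime hp
  -- key units computation
  have hA1 : ∀ k : ℤ, A ^ ((3 * r : ℕ) * k : ℤ) = 1 := by
    intro k
    rw [zpow_mul, zpow_natCast, hA, one_zpow]
  have main : ∀ ε : ℤ, (p : ℤ) ≡ ε [ZMOD r] → A ^ (6 * (p : ℤ)) = A ^ (6 * ε) := by
    intro ε hε
    obtain ⟨k, hk⟩ := hε.dvd
    have h6 : 6 * (p : ℤ) = 6 * ε + ((3 * r : ℕ) : ℤ) * (-2 * k) := by
      push_cast
      linarith [hk]
    rw [h6, zpow_add, hA1, mul_one]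
  rw [add_pow_expChar, add_pow_expChar, one_pow]
  have hx : ((A ^ 6 : Rˣ) : R) ^ p = ((A ^ (6 * (p : ℤ)) : Rˣ) : R) := by
    rw [← Units.val_pow_eq_pow_val, ← zpow_natCast, ← zpow_natCast, ← zpow_mul]
    norm_num
  have hy : ((A ^ (-6 : ℤ) : Rˣ) : R) ^ p = ((A ^ (-(6 * (p : ℤ))) : Rˣ) : R) := by
    rw [← Units.val_pow_eq_pow_val, ← zpow_natCast, ← zpow_mul]
    ring_nf
  rcases hmod with h | h
  · have h1 := main 1 h
    have e : A ^ (6 * (1 : ℤ)) = A ^ (6 : ℕ) := by norm_cast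
    have e2 : ((A ^ (6 : ℕ) : Rˣ))⁻¹ = A ^ (-6 : ℤ) := by
      rw [zpow_neg]; norm_cast
    rw [hx, hy, zpow_neg, h1, e, e2]
  · have h1 := main (-1) h
    have e : A ^ (6 * (-1 : ℤ)) = A ^ (-6 : ℤ) := by norm_num
    have e2 : ((A ^ (-6 : ℤ) : Rˣ))⁻¹ = A ^ (6 : ℕ) := by
      rw [← zpow_neg]; norm_cast
    rw [hx, hy, zpow_neg, h1, e, e2]
    ring
end

section
/- Let ζ ∈ ℂ be a primitive 15th root of unity. Then for every integer k, 1 - ζ - ζ² + ζ³ - ζ⁴ + ζ⁵ - ζ⁷ ≠ ζ^k. -/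
open Polynomial

lemma cyc15 : cyclotomic 15 ℤ =
    X ^ 8 - X ^ 7 + X ^ 5 - X ^ 4 + X ^ 3 - X + 1 := by
  have h15 : (0:ℕ) < 15 := by norm_num
  have hprod := prod_cyclotomic_eq_X_pow_sub_one h15 ℤ
  have hdiv : Nat.divisors 15 = {1, 3, 5, 15} := by decide
  rw [hdiv] at hprod
  have h3 : cyclotomic 3 ℤ = X ^ 2 + X + 1 := by
    haveI : Fact (Nat.Prime 3) := ⟨by norm_num⟩
    have := cyclotomic_prime ℤ 3
    rw [this]
    simp [Finset.sum_range_succ]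
    ring
  have h5 : cyclotomic 5 ℤ = X ^ 4 + X ^ 3 + X ^ 2 + X + 1 := by
    haveI : Fact (Nat.Prime 5) := ⟨by norm_num⟩
    have := cyclotomic_prime ℤ 5
    rw [this]
    simp [Finset.sum_range_succ]
    ring
  have h1 : cyclotomic 1 ℤ = X - 1 := cyclotomic_one ℤ
  rw [show ({1, 3, 5, 15} : Finset ℕ) = insert 1 (insert 3 (insert 5 {15})) from rfl] at hprod
  rw [Finset.prod_insert (by decide), Finset.prod_insert (by decide),
    Finset.prod_insert (by decide), Finset.prod_singleton, h1, h3, h5] at hprod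
  have hc : ((X:ℤ[X]) - 1) * ((X ^ 2 + X + 1) * ((X ^ 4 + X ^ 3 + X ^ 2 + X + 1) *
      (X ^ 8 - X ^ 7 + X ^ 5 - X ^ 4 + X ^ 3 - X + 1))) = X ^ 15 - 1 := by ring
  have hne : ((X:ℤ[X]) - 1) * (X ^ 2 + X + 1) * (X ^ 4 + X ^ 3 + X ^ 2 + X + 1) ≠ 0 := by
    intro h
    have := congrArg (Polynomial.eval 2) h
    norm_num at this
  have : ((X:ℤ[X]) - 1) * (X ^ 2 + X + 1) * (X ^ 4 + X ^ 3 + X ^ 2 + X + 1) * cyclotomic 15 ℤ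
      = ((X:ℤ[X]) - 1) * (X ^ 2 + X + 1) * (X ^ 4 + X ^ 3 + X ^ 2 + X + 1) *
        (X ^ 8 - X ^ 7 + X ^ 5 - X ^ 4 + X ^ 3 - X + 1) := by
    rw [mul_assoc, mul_assoc, hprod, mul_assoc, mul_assoc, hc]
  exact mul_left_cancel₀ hne this

theorem stmt_5 (ζ : ℂ) (hζ : IsPrimitiveRoot ζ 15) (k : ℤ) :
    1 - ζ - ζ ^ 2 + ζ ^ 3 - ζ ^ 4 + ζ ^ 5 - ζ ^ 7 ≠ ζ ^ k := by
  intro heq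
  have hne : ζ ≠ 0 := hζ.ne_zero (by norm_num)
  have h15 : ζ ^ (15:ℕ) = 1 := hζ.pow_eq_one
  -- reduce the exponent mod 15
  set j : ℕ := (k % 15).toNat with hj
  have hjlt : j < 15 := by
    have := Int.emod_lt_of_pos k (by norm_num : (0:ℤ) < 15)
    have h0 := Int.emod_nonneg k (by norm_num : (15:ℤ) ≠ 0)
    omega
  have hjk : (k % 15) = (j:ℤ) := by
    rw [hj, Int.toNat_of_nonneg (Int.emod_nonneg k (by norm_num))]
  have hzk : ζ ^ k = ζ ^ j := by
    have h1 : ζ ^ k = ζ ^ (15 * (k / 15) + k % 15) := by rw [Int.mul_ediv_add_emod]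
    have h2 : ζ ^ (15:ℤ) = 1 := by
      rw [show (15:ℤ) = ((15:ℕ):ℤ) from rfl, zpow_natCast]; exact h15
    rw [h1, zpow_add₀ hne, zpow_mul, h2, one_zpow, one_mul, hjk, zpow_natCast]
  rw [hzk] at heq
  -- polynomial relation
  set q : ℤ[X] := 1 - X - X ^ 2 + X ^ 3 - X ^ 4 + X ^ 5 - X ^ 7 - X ^ j with hq
  have haev : aeval ζ q = 0 := by
    rw [hq]
    simp only [map_sub, map_add, map_one, map_pow, aeval_X, aeval_one]
    rw [← heq]; ring
  have hint : IsIntegral ℤ ζ := hζ.isIntegral (by norm_num)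
  have hdvd : cyclotomic 15 ℤ ∣ q := by
    rw [Polynomial.cyclotomic_eq_minpoly hζ (by norm_num)]
    exact minpoly.isIntegrallyClosed_dvd hint haev
  have heval := Polynomial.eval_dvd (x := (2:ℤ)) hdvd
  rw [cyc15] at heval
  simp only [hq, eval_sub, eval_add, eval_one, eval_pow, eval_X] at heval
  norm_num at heval
  interval_cases j <;> norm_num at heval
end

section
/- Let p be a prime and R a commutative ring with (p : R) = 0. Let S be a finite type with a ℤ/pℤ-action with fixed point set Fix, and let f : S → R be invariant under the action. Suppose g : Fix → R satisfies f(s) = g(s)^p for every s ∈ Fix. Then ∑_{s ∈ S} f(s) = (∑_{s ∈ Fix} g(s))^p. -/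
theorem stmt_11 (p : ℕ) (hp : p.Prime) [NeZero p] (R : Type*) [CommRing R] (hchar : (p : R) = 0)
    (S : Type*) [Fintype S] [DecidableEq S] [MulAction (Multiplicative (ZMod p)) S]
    (f : S → R)
    (hf : ∀ (γ : Multiplicative (ZMod p)) (s : S), f (γ • s) = f s)
    (g : {s : S // ∀ γ : Multiplicative (ZMod p), γ • s = s} → R)
    (hg : ∀ s : {s : S // ∀ γ : Multiplicative (ZMod p), γ • s = s}, f s.1 = g s ^ p) :
    (∑ s : S, f s)
      = (∑ s : {s : S // ∀ γ : Multiplicative (ZMod p), γ • s = s}, g s) ^ p := by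
  classical
  rcases subsingleton_or_nontrivial R with hR | hR
  · exact Subsingleton.elim _ _
  haveI : Fact p.Prime := ⟨hp⟩
  haveI : CharP R p := (CharP.charP_iff_prime_eq_zero hp).2 hchar
  rw [sum_pow_char]
  have hcardG : Fintype.card (Multiplicative (ZMod p)) = p := by
    rw [Fintype.card_multiplicative, ZMod.card]
  have hRHS : (∑ s : {s : S // ∀ γ : Multiplicative (ZMod p), γ • s = s}, g s ^ p)
      = ∑ s : {s : S // ∀ γ : Multiplicative (ZMod p), γ • s = s}, f s.1 :=
    Finset.sum_congr rfl fun s _ => (hg s).symm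
  rw [hRHS]
  have hsub : (∑ s : {s : S // ∀ γ : Multiplicative (ZMod p), γ • s = s}, f s.1)
      = ∑ s ∈ Finset.univ.filter (fun s : S => ∀ γ : Multiplicative (ZMod p), γ • s = s), f s :=
    (Finset.sum_subtype _ (fun x => by simp) f).symm
  rw [hsub]
  rw [← Finset.sum_filter_add_sum_filter_not Finset.univ
      (fun s : S => ∀ γ : Multiplicative (ZMod p), γ • s = s) f]
  suffices h0 : ∑ s ∈ Finset.univ.filter
      (fun s : S => ¬ ∀ γ : Multiplicative (ZMod p), γ • s = s), f s = 0 by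
    rw [h0, add_zero]
  -- sum over non-fixed points vanishes: fibers over the orbit map have cardinality p
  set N := Finset.univ.filter
      (fun s : S => ¬ ∀ γ : Multiplicative (ZMod p), γ • s = s) with hN
  set q : S → Quotient (MulAction.orbitRel (Multiplicative (ZMod p)) S) :=
      fun s => ⟦s⟧ with hq
  rw [← Finset.sum_fiberwise_of_maps_to (g := q) (t := N.image q)
      (fun x hx => Finset.mem_image_of_mem q hx) f]
  refine Finset.sum_eq_zero fun b hb => ?_
  obtain ⟨s₀, hs₀N, hs₀⟩ := Finset.mem_image.1 hb
  have hs₀nf : ¬ ∀ γ : Multiplicative (ZMod p), γ • s₀ = s₀ :=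
    (Finset.mem_filter.1 hs₀N).2
  -- the fiber is exactly the orbit of s₀
  have hfiber : N.filter (fun x => q x = b) = (MulAction.orbit (Multiplicative (ZMod p)) s₀).toFinset := by
    ext x
    simp only [Finset.mem_filter, Set.mem_toFinset, hN, Finset.mem_univ, true_and, hq, ← hs₀]
    constructor
    · rintro ⟨-, hx⟩
      exact Quotient.exact hx
    · intro hx
      have hrel : MulAction.orbitRel (Multiplicative (ZMod p)) S x s₀ := hx
      obtain ⟨γ, hγ⟩ := hx
      refine ⟨fun hfix => hs₀nf fun γ' => ?_, Quotient.sound hrel⟩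
      -- if x is fixed, then s₀ = γ⁻¹ • x is fixed too
      have hx' : s₀ = γ⁻¹ • x := by rw [← hγ, inv_smul_smul]
      rw [hx', ← smul_assoc, hfix _, hfix]
  rw [hfiber]
  -- f is constant (= f s₀) on the orbit
  have hconst : ∀ x ∈ (MulAction.orbit (Multiplicative (ZMod p)) s₀).toFinset, f x = f s₀ := by
    intro x hx
    obtain ⟨γ, hγ⟩ := Set.mem_toFinset.1 hx
    rw [← hγ, hf]
  rw [Finset.sum_congr rfl hconst, Finset.sum_const]
  -- the orbit has cardinality p
  have hcard : (MulAction.orbit (Multiplicative (ZMod p)) s₀).toFinset.card = p := by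
    rw [Set.toFinset_card]
    have hdvd : Fintype.card (MulAction.orbit (Multiplicative (ZMod p)) s₀) ∣ p := by
      refine ⟨Fintype.card (MulAction.stabilizer (Multiplicative (ZMod p)) s₀), ?_⟩
      have hos := MulAction.card_orbit_mul_card_stabilizer_eq_card_group
        (Multiplicative (ZMod p)) s₀
      rw [hcardG] at hos
      exact hos.symm
    rcases (Nat.Prime.eq_one_or_self_of_dvd hp _ hdvd) with h1 | h
    · exfalso
      apply hs₀nf
      intro γ
      have h₁ : (γ • s₀ : S) ∈ MulAction.orbit (Multiplicative (ZMod p)) s₀ := ⟨γ, rfl⟩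
      have h₂ : (s₀ : S) ∈ MulAction.orbit (Multiplicative (ZMod p)) s₀ :=
        MulAction.mem_orbit_self s₀
      have := Fintype.card_le_one_iff.1 h1.le ⟨_, h₁⟩ ⟨_, h₂⟩
      exact Subtype.ext_iff.1 this
    · exact h
  rw [hcard, nsmul_eq_mul, hchar, zero_mul]
end
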